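/- arXiv:2403.16058 — 4 statements merged into one kernel-verified Lean document; each statement's English description precedes it below -/
import Mathlib

section
/- Let σ and τ(k), k ≥ 0, be random times with τ(0)=0 such that E e^{κ τ(k)} ≤ C_0^k V for all k ≥ 0 (with κ > 0, C_0 ≥ 1, V ≥ 1) and P{σ > τ(k+1)} ≤ r^k for all k ≥ 0 with r ∈ (0,1), and suppose σ ≤ τ(k+1) on {τ(k) < σ ≤ τ(k+1)} and σ < ∞ almost surely. Then there exist γ > 0 and C > 0, depending only on κ, C_0, r, such that E e^{γσ} ≤ C V. In particular one may take any R > 1 with C_0^{1/R} r^{1-1/R} < 1 and any γ with Rγ < κ. -/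
open MeasureTheory
open scoped ENNReal

/-- `eexpGrowth κ n = e^{κ n}` for `n ∈ ℕ∞`, with value `⊤` at `n = ∞`. -/
noncomputable def eexpGrowth (κ : ℝ) (n : ℕ∞) : ℝ≥0∞ :=
  if n = ⊤ then ⊤ else ENNReal.ofReal (Real.exp (κ * (n.toNat : ℝ)))

lemma measurableSet_rel' {Ω} [MeasurableSpace Ω] {f g : Ω → ℕ∞} (hf : Measurable f)
    (hg : Measurable g) (Rel : ℕ∞ → ℕ∞ → Prop) : MeasurableSet {ω | Rel (f ω) (g ω)} := by
  have h : {ω | Rel (f ω) (g ω)} = ⋃ a : ℕ∞, (f ⁻¹' {a}) ∩ (g ⁻¹' {b | Rel a b}) := by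
    ext ω; simp
  rw [h]
  exact MeasurableSet.iUnion fun a => (hf trivial).inter (hg trivial)

lemma eexpGrowth_mono {γ : ℝ} (hγ : 0 ≤ γ) {n m : ℕ∞} (h : n ≤ m) :
    eexpGrowth γ n ≤ eexpGrowth γ m := by
  unfold eexpGrowth
  rcases eq_or_ne m ⊤ with hm | hm
  · simp [hm]
  · have hn : n ≠ ⊤ := fun hn => hm (top_le_iff.mp (hn ▸ h))
    simp only [hm, hn, if_false]
    refine ENNReal.ofReal_le_ofReal (Real.exp_le_exp.2 (mul_le_mul_of_nonneg_left ?_ hγ))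
    exact_mod_cast ENat.toNat_le_toNat h hm

lemma eexpGrowth_le_exp {γ κ : ℝ} (hκ : γ ≤ κ) (n : ℕ∞) :
    eexpGrowth γ n ≤ eexpGrowth κ n := by
  unfold eexpGrowth
  split
  · exact le_rfl
  · exact ENNReal.ofReal_le_ofReal (Real.exp_le_exp.2
      (mul_le_mul_of_nonneg_right hκ (Nat.cast_nonneg _)))

lemma eexpGrowth_rpow {γ R : ℝ} (hR : 0 < R) (n : ℕ∞) :
    eexpGrowth γ n ^ R = eexpGrowth (R * γ) n := by
  unfold eexpGrowth
  split
  · exact ENNReal.top_rpow_of_pos hR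
  · rw [ENNReal.ofReal_rpow_of_pos (Real.exp_pos _), ← Real.exp_mul]
    ring_nf

/-- The quantitative core of the argument, for a fixed Hölder exponent `R`. -/
lemma exp_moment_key
    {Ω : Type*} [MeasurableSpace Ω] (P : Measure Ω) [IsProbabilityMeasure P]
    (σ : Ω → ℕ∞) (τ : ℕ → Ω → ℕ∞)
    (hσmeas : Measurable σ) (hτmeas : ∀ k, Measurable (τ k))
    (κ : ℝ) (C₀ V r : ℝ) (hC₀ : 1 ≤ C₀) (hV : 1 ≤ V)
    (hr : r ∈ Set.Ioo (0 : ℝ) 1)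
    (hτexp : ∀ k : ℕ, ∫⁻ ω, eexpGrowth κ (τ k ω) ∂P ≤ ENNReal.ofReal (C₀ ^ k * V))
    (hστ : ∀ k : ℕ, P {ω | τ (k + 1) ω < σ ω} ≤ ENNReal.ofReal (r ^ k))
    (R γ : ℝ) (hR : 1 < R) (hρ1 : C₀ ^ (1 / R) * r ^ (1 - 1 / R) < 1)
    (hγ : 0 < γ) (hRγ : R * γ < κ) :
    ∃ C : ℝ, 0 < C ∧ ∫⁻ ω, eexpGrowth γ (σ ω) ∂P ≤ ENNReal.ofReal (C * V) := by
  classical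
  obtain ⟨hr0, hr1⟩ := hr
  have hC₀0 : (0:ℝ) < C₀ := lt_of_lt_of_le one_pos hC₀
  have hV0 : (0:ℝ) < V := lt_of_lt_of_le one_pos hV
  have hR0 : (0:ℝ) < R := lt_trans one_pos hR
  have ht0 : (0:ℝ) < 1/R := by positivity
  have ht1 : 1/R ≤ 1 := by rw [div_le_one hR0]; exact hR.le
  have hs0 : (0:ℝ) < 1 - 1/R := by
    have : 1/R < 1 := by rw [div_lt_one hR0]; exact hR
    linarith
  -- the sets
  set D : ℕ → Set Ω := fun k => {ω | σ ω ≤ τ (k+1) ω ∧ (k = 0 ∨ τ k ω < σ ω)} with hDdef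
  set B : ℕ → Set Ω := fun k => if k = 0 then Set.univ else {ω | τ k ω < σ ω} with hBdef
  have hBmeas : ∀ k, MeasurableSet (B k) := by
    intro k
    simp only [hBdef]
    rcases eq_or_ne k 0 with hk | hk
    · rw [if_pos hk]; exact MeasurableSet.univ
    · rw [if_neg hk]; exact measurableSet_rel' (hτmeas _) hσmeas (· < ·)
  have hDmeas : ∀ k, MeasurableSet (D k) := by
    intro k
    have h1 : MeasurableSet {ω | σ ω ≤ τ (k+1) ω} := measurableSet_rel' hσmeas (hτmeas _) (· ≤ ·)
    have h2 : MeasurableSet {ω | τ k ω < σ ω} := measurableSet_rel' (hτmeas _) hσmeas (· < ·)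
    have : D k = {ω | σ ω ≤ τ (k+1) ω} ∩ (if k = 0 then Set.univ else {ω | τ k ω < σ ω}) := by
      ext ω; by_cases hk : k = 0 <;> simp [hDdef, hk]
    rw [this]
    rcases eq_or_ne k 0 with hk | hk
    · rw [if_pos hk]; exact h1.inter MeasurableSet.univ
    · rw [if_neg hk]; exact h1.inter h2
  have hDB : ∀ k, D k ⊆ B k := by
    intro k ω hω
    simp only [hDdef, Set.mem_setOf_eq] at hω
    simp only [hBdef]
    rcases eq_or_ne k 0 with hk | hk
    · rw [if_pos hk]; trivial
    · rw [if_neg hk]; exact hω.2.resolve_left hk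
  -- the null set
  set N : Set Ω := {ω | ∀ k : ℕ, τ (k+1) ω < σ ω} with hNdef
  have hPN : P N = 0 := by
    have hle : ∀ k : ℕ, P N ≤ ENNReal.ofReal (r ^ k) := fun k =>
      le_trans (measure_mono fun ω hω => hω k) (hστ k)
    have htend : Filter.Tendsto (fun k : ℕ => ENNReal.ofReal (r ^ k)) Filter.atTop (nhds 0) := by
      rw [← ENNReal.ofReal_zero]
      exact ENNReal.tendsto_ofReal (tendsto_pow_atTop_nhds_zero_of_lt_one hr0.le hr1)
    exact le_antisymm (ge_of_tendsto htend (Filter.Eventually.of_forall hle)) zero_le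
  -- pointwise bound off N
  set g : ℕ → Ω → ℝ≥0∞ :=
    fun k => (D k).indicator (fun ω => eexpGrowth γ (τ (k+1) ω)) with hgdef
  have hpt : ∀ ω, ω ∉ N → eexpGrowth γ (σ ω) ≤ ∑' k, g k ω := by
    intro ω hω
    simp only [hNdef, Set.mem_setOf_eq, not_forall, not_lt] at hω
    have hmem : ω ∈ D (Nat.find hω) := by
      simp only [hDdef, Set.mem_setOf_eq]
      refine ⟨Nat.find_spec hω, ?_⟩
      rcases Nat.eq_zero_or_pos (Nat.find hω) with h0 | hpos
      · exact Or.inl h0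
      · refine Or.inr (not_le.mp ?_)
        have hmin := Nat.find_min hω (Nat.sub_lt hpos one_pos)
        have heq : Nat.find hω - 1 + 1 = Nat.find hω := by omega
        rwa [heq] at hmin
    calc eexpGrowth γ (σ ω) ≤ eexpGrowth γ (τ (Nat.find hω + 1) ω) :=
          eexpGrowth_mono hγ.le (Nat.find_spec hω)
      _ = g (Nat.find hω) ω := by
          simp only [hgdef]
          rw [Set.indicator_of_mem hmem]
      _ ≤ ∑' k, g k ω := ENNReal.le_tsum _
  have hgmeas : ∀ k, Measurable (g k) := by
    intro k
    simp only [hgdef]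
    have hm : Measurable (fun ω => eexpGrowth γ (τ (k+1) ω)) :=
      (measurable_from_top (f := eexpGrowth γ)).comp (hτmeas (k+1))
    exact hm.indicator (hDmeas k)
  -- Hölder per term
  have hpq : (R/(R-1)).HolderConjugate R := (Real.HolderConjugate.conjExponent hR).symm
  have hterm : ∀ k, ∫⁻ ω, g k ω ∂P ≤
      ENNReal.ofReal ((r^k/r)^(1-1/R) * (C₀^(k+1)*V)^(1/R)) := by
    intro k
    set f1 : Ω → ℝ≥0∞ := (B k).indicator 1 with hf1def
    set f2 : Ω → ℝ≥0∞ := fun ω => eexpGrowth γ (τ (k+1) ω) with hf2def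
    have h1 : ∀ ω, g k ω ≤ (f1 * f2) ω := by
      intro ω
      simp only [hgdef, hf1def, hf2def, Pi.mul_apply]
      by_cases hω : ω ∈ D k
      · rw [Set.indicator_of_mem hω, Set.indicator_of_mem (hDB k hω)]
        simp
      · rw [Set.indicator_of_notMem hω]
        exact zero_le
    have hHolder := ENNReal.lintegral_mul_le_Lp_mul_Lq P hpq
        ((measurable_one.indicator (hBmeas k)).aemeasurable)
        (((measurable_from_top (f := eexpGrowth γ)).comp (hτmeas (k+1))).aemeasurable)
    have hf1p : ∫⁻ ω, f1 ω ^ (R/(R-1)) ∂P = P (B k) := by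
      have heq : ∀ ω, f1 ω ^ (R/(R-1)) = f1 ω := by
        intro ω
        simp only [hf1def]
        by_cases hω : ω ∈ B k
        · simp [Set.indicator_of_mem hω]
        · simp [Set.indicator_of_notMem hω, ENNReal.zero_rpow_of_pos hpq.pos]
      simp_rw [heq]
      exact lintegral_indicator_one (hBmeas k)
    have hf2q : ∫⁻ ω, f2 ω ^ R ∂P ≤ ENNReal.ofReal (C₀^(k+1) * V) := by
      refine le_trans (lintegral_mono fun ω => ?_) (hτexp (k+1))
      simp only [hf2def]
      rw [eexpGrowth_rpow hR0]
      exact eexpGrowth_le_exp hRγ.le _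
    have hPB : P (B k) ≤ ENNReal.ofReal (r^k / r) := by
      simp only [hBdef]
      cases k with
      | zero =>
        simp only [reduceIte, measure_univ, pow_zero]
        exact ENNReal.one_le_ofReal.mpr (one_le_one_div hr0 hr1.le)
      | succ m =>
        rw [if_neg (Nat.succ_ne_zero m)]
        refine le_trans (hστ m) (le_of_eq ?_)
        congr 1
        rw [pow_succ, mul_div_cancel_right₀ _ hr0.ne']
    have h1div : 1/(R/(R-1)) = 1 - 1/R := by
      rw [one_div_div, sub_div, div_self hR0.ne', one_sub_div hR0.ne']
    calc ∫⁻ ω, g k ω ∂P ≤ ∫⁻ ω, (f1*f2) ω ∂P := lintegral_mono h1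
      _ ≤ (∫⁻ ω, f1 ω ^ (R/(R-1)) ∂P) ^ (1/(R/(R-1))) * (∫⁻ ω, f2 ω ^ R ∂P) ^ (1/R) := hHolder
      _ = (P (B k)) ^ (1-1/R) * (∫⁻ ω, f2 ω ^ R ∂P) ^ (1/R) := by rw [hf1p, h1div]
      _ ≤ (ENNReal.ofReal (r^k/r)) ^ (1-1/R) * (ENNReal.ofReal (C₀^(k+1)*V)) ^ (1/R) :=
          mul_le_mul' (ENNReal.rpow_le_rpow hPB hs0.le) (ENNReal.rpow_le_rpow hf2q ht0.le)
      _ = ENNReal.ofReal ((r^k/r)^(1-1/R)) * ENNReal.ofReal ((C₀^(k+1)*V)^(1/R)) := by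
          rw [ENNReal.ofReal_rpow_of_pos (by positivity),
            ENNReal.ofReal_rpow_of_pos (by positivity)]
      _ = ENNReal.ofReal ((r^k/r)^(1-1/R) * (C₀^(k+1)*V)^(1/R)) :=
          (ENNReal.ofReal_mul (by positivity)).symm
  -- real geometric estimates
  have hρ0 : (0:ℝ) ≤ C₀^(1/R) * r^(1-1/R) := by positivity
  have hreal : ∀ k : ℕ, (r^k/r)^(1-1/R) * (C₀^(k+1)*V)^(1/R) ≤
      ((1/r)^(1-1/R) * C₀^(1/R) * V) * (C₀^(1/R) * r^(1-1/R))^k := by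
    intro k
    have e1 : ((r^k/r : ℝ))^(1-1/R) = (1/r)^(1-1/R) * (r^(1-1/R))^k := by
      rw [show (r^k/r : ℝ) = (1/r) * r^k by ring,
        Real.mul_rpow (by positivity) (by positivity)]
      congr 1
      rw [← Real.rpow_natCast r k, ← Real.rpow_mul hr0.le, mul_comm,
        Real.rpow_mul hr0.le, Real.rpow_natCast]
    have e2 : ((C₀^(k+1)*V : ℝ))^(1/R) = (C₀^(1/R))^(k+1) * V^(1/R) := by
      rw [Real.mul_rpow (by positivity) (by positivity)]
      congr 1
      rw [← Real.rpow_natCast C₀ (k+1), ← Real.rpow_mul hC₀0.le, mul_comm,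
        Real.rpow_mul hC₀0.le, Real.rpow_natCast]
    have hV' : V^(1/R) ≤ V := by
      calc V^(1/R) ≤ V^(1:ℝ) := Real.rpow_le_rpow_of_exponent_le hV ht1
        _ = V := Real.rpow_one V
    rw [e1, e2]
    calc (1/r)^(1-1/R) * (r^(1-1/R))^k * ((C₀^(1/R))^(k+1) * V^(1/R))
        ≤ (1/r)^(1-1/R) * (r^(1-1/R))^k * ((C₀^(1/R))^(k+1) * V) := by
          refine mul_le_mul_of_nonneg_left (mul_le_mul_of_nonneg_left hV' (by positivity))
            (by positivity)
      _ = ((1/r)^(1-1/R) * C₀^(1/R) * V) * (C₀^(1/R) * r^(1-1/R))^k := by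
          rw [mul_pow, pow_succ]; ring
  -- conclusion
  have h1ρ : (0:ℝ) < 1 - C₀^(1/R) * r^(1-1/R) := sub_pos.2 hρ1
  refine ⟨(1/r)^(1-1/R) * C₀^(1/R) * (1 - C₀^(1/R) * r^(1-1/R))⁻¹, by positivity, ?_⟩
  calc ∫⁻ ω, eexpGrowth γ (σ ω) ∂P ≤ ∫⁻ ω, ∑' k, g k ω ∂P := by
        refine lintegral_mono_ae ?_
        filter_upwards [compl_mem_ae_iff.2 hPN] with ω hω using hpt ω hω
    _ = ∑' k, ∫⁻ ω, g k ω ∂P := lintegral_tsum fun k => (hgmeas k).aemeasurable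
    _ ≤ ∑' k, ENNReal.ofReal ((r^k/r)^(1-1/R) * (C₀^(k+1)*V)^(1/R)) :=
        ENNReal.tsum_le_tsum hterm
    _ ≤ ∑' k, ENNReal.ofReal (((1/r)^(1-1/R) * C₀^(1/R) * V) * (C₀^(1/R) * r^(1-1/R))^k) :=
        ENNReal.tsum_le_tsum fun k => ENNReal.ofReal_le_ofReal (hreal k)
    _ = ENNReal.ofReal (∑' k : ℕ, ((1/r)^(1-1/R) * C₀^(1/R) * V) * (C₀^(1/R) * r^(1-1/R))^k) :=
        (ENNReal.ofReal_tsum_of_nonneg (fun k => by positivity)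
          ((summable_geometric_of_lt_one hρ0 hρ1).mul_left _)).symm
    _ = ENNReal.ofReal ((1/r)^(1-1/R) * C₀^(1/R) * (1 - C₀^(1/R) * r^(1-1/R))⁻¹ * V) := by
        rw [tsum_mul_left, tsum_geometric_of_lt_one hρ0 hρ1]
        congr 1
        ring

/-- Exponential moment for the coupling time. -/
theorem exp_moment_coupling_time
    {Ω : Type*} [MeasurableSpace Ω] (P : Measure Ω) [IsProbabilityMeasure P]
    (σ : Ω → ℕ∞) (τ : ℕ → Ω → ℕ∞)
    (hσmeas : Measurable σ) (hτmeas : ∀ k, Measurable (τ k))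
    (hτ0 : ∀ ω, τ 0 ω = 0)
    (hτmono : ∀ ω, Monotone (fun k => τ k ω))
    (κ : ℝ) (C₀ V r : ℝ) (hκ : 0 < κ) (hC₀ : 1 ≤ C₀) (hV : 1 ≤ V)
    (hr : r ∈ Set.Ioo (0 : ℝ) 1)
    (hτexp : ∀ k : ℕ, ∫⁻ ω, eexpGrowth κ (τ k ω) ∂P ≤ ENNReal.ofReal (C₀ ^ k * V))
    (hστ : ∀ k : ℕ, P {ω | τ (k + 1) ω < σ ω} ≤ ENNReal.ofReal (r ^ k))
    (hσfin : P {ω | σ ω = ⊤} = 0) :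
    (∃ γ C : ℝ, 0 < γ ∧ 0 < C ∧
        ∫⁻ ω, eexpGrowth γ (σ ω) ∂P ≤ ENNReal.ofReal (C * V)) ∧
    (∀ R γ : ℝ, 1 < R → C₀ ^ (1 / R) * r ^ (1 - 1 / R) < 1 → 0 < γ → R * γ < κ →
        ∃ C : ℝ, 0 < C ∧
          ∫⁻ ω, eexpGrowth γ (σ ω) ∂P ≤ ENNReal.ofReal (C * V)) := by
  obtain ⟨hr0, hr1⟩ := hr
  have hC₀0 : (0:ℝ) < C₀ := lt_of_lt_of_le one_pos hC₀
  have key := exp_moment_key P σ τ hσmeas hτmeas κ C₀ V r hC₀ hV ⟨hr0, hr1⟩ hτexp hστ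
  refine ⟨?_, key⟩
  -- choose a suitable R
  set L : ℝ := Real.log C₀ with hLdef
  set M : ℝ := -Real.log r with hMdef
  have hM : 0 < M := neg_pos.2 (Real.log_neg hr0 hr1)
  have hL : 0 ≤ L := Real.log_nonneg hC₀
  set R : ℝ := max 2 ((L+M)/M + 1) with hRdef
  have hR : 1 < R := lt_of_lt_of_le one_lt_two (le_max_left _ _)
  have hR0 : (0:ℝ) < R := lt_trans one_pos hR
  have hRgt : (L+M)/M < R := lt_of_lt_of_le (lt_add_one _) (le_max_right _ _)
  have hρ1 : C₀^(1/R) * r^(1-1/R) < 1 := by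
    rw [Real.rpow_def_of_pos hC₀0, Real.rpow_def_of_pos hr0, ← Real.exp_add]
    refine lt_of_lt_of_eq (Real.exp_lt_exp.2 ?_) Real.exp_zero
    have h1 : L + M < M * R := by
      have h2 := (div_lt_iff₀ hM).mp hRgt
      linarith
    have h3 : Real.log C₀ * (1/R) + Real.log r * (1-1/R) = ((L + M) - M * R)/R := by
      rw [← hLdef, show Real.log r = -M by rw [hMdef]; ring]
      field_simp
      ring
    rw [h3]
    exact div_neg_of_neg_of_pos (by linarith) hR0
  have hγpos : 0 < κ/(2*R) := by positivity
  have hRγ : R * (κ/(2*R)) < κ := by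
    have : R * (κ/(2*R)) = κ/2 := by field_simp
    rw [this]; linarith
  obtain ⟨C, hC, hint⟩ := key R (κ/(2*R)) hR hρ1 hγpos hRγ
  exact ⟨κ/(2*R), C, hγpos, hC, hint⟩
end

section
/- Let f: ℝ × [-1,1] → ℝ be locally Lipschitz, with f satisfying y f(y,z) ≤ -α y² + C. Fix initial data (y₀, z₀) with y₀ > 0 and z₀ ∈ [-1,1), and let ε₀ = (1 - z₀)/y₀. Then for every ε ∈ (0, ε₀), setting a = 2(1 - z₀ - y₀ε)/ε², the functions y(t) = ta + y₀ and z(t) = t²a/2 + y₀t + z₀ satisfy: ż(t) = y(t), |z(t)| ≤ 1 for t ∈ [0,ε], z(ε) = 1, y(ε) > 0, and ẏ(t) = f(y(t),z(t)) + u(t) with the continuous control u(t) = a - f(y(t), z(t)). -/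
/-- Explicit controlled trajectory from the elastic phase to the plastic boundary
`z = 1` in time `ε`: with `a = 2(1 - z₀ - y₀ ε)/ε²`, the functions
`y t = t a + y₀`, `z t = t² a / 2 + y₀ t + z₀` solve `ż = y`,
`ẏ = f(y,z) + u` with the continuous control `u t = a - f (y t, z t)`,
stay in `|z| ≤ 1` on `[0, ε]`, and reach `z ε = 1` with `y ε > 0`. -/
theorem steer_to_plastic_boundary
    (f : ℝ × ℝ → ℝ) (hf : LocallyLipschitz f)
    (α C : ℝ) (hα : 0 < α) (hC : 0 < C)
    (hdiss : ∀ y z : ℝ, z ∈ Set.Icc (-1 : ℝ) 1 → y * f (y, z) ≤ -α * y ^ 2 + C)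
    (y₀ z₀ : ℝ) (hy₀ : 0 < y₀) (hz₀ : z₀ ∈ Set.Ico (-1 : ℝ) 1)
    (ε : ℝ) (hε : ε ∈ Set.Ioo 0 ((1 - z₀) / y₀)) :
    ∀ a y z u : _,
      a = 2 * (1 - z₀ - y₀ * ε) / ε ^ 2 →
      y = (fun t : ℝ => t * a + y₀) →
      z = (fun t : ℝ => t ^ 2 * a / 2 + y₀ * t + z₀) →
      u = (fun t : ℝ => a - f (y t, z t)) →
      (∀ t : ℝ, HasDerivAt z (y t) t) ∧
      (∀ t ∈ Set.Icc 0 ε, |z t| ≤ 1) ∧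
      z ε = 1 ∧ 0 < y ε ∧
      (∀ t : ℝ, HasDerivAt y (f (y t, z t) + u t) t) ∧
      Continuous u := by
  intro a y z u ha hy hz hu
  obtain ⟨hε0, hεlt⟩ := hε
  have hεne : ε ≠ 0 := ne_of_gt hε0
  have hnum : 0 < 1 - z₀ - y₀ * ε := by
    have h := (lt_div_iff₀ hy₀).mp hεlt
    nlinarith
  have hε2 : (0:ℝ) < ε ^ 2 := by positivity
  have hapos : 0 < a := by rw [ha]; positivity
  have hzε : z ε = 1 := by
    rw [hz, ha]; field_simp; ring
  refine ⟨?_, ?_, hzε, ?_, ?_, ?_⟩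
  · intro t
    rw [hz, hy]
    have : HasDerivAt (fun t : ℝ => t ^ 2 * a / 2 + y₀ * t + z₀) (t * a + y₀) t := by
      have h1 : HasDerivAt (fun t : ℝ => t ^ 2) (2 * t) t := by
        simpa using (hasDerivAt_pow 2 t)
      have h := (((h1.mul_const a).div_const 2).add
        ((hasDerivAt_id t).const_mul y₀)).add_const z₀
      refine h.congr_deriv ?_
      ring
    exact this
  · intro t ⟨ht0, htε⟩
    rw [hz]
    have hlow : (-1:ℝ) ≤ t ^ 2 * a / 2 + y₀ * t + z₀ := by
      nlinarith [hz₀.1, mul_nonneg ht0 ht0]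
    have hhigh : t ^ 2 * a / 2 + y₀ * t + z₀ ≤ 1 := by
      have hε1 : ε ^ 2 * a / 2 + y₀ * ε + z₀ = 1 := by
        have := hzε; rw [hz] at this; simpa using this
      nlinarith [mul_nonneg (mul_nonneg (sub_nonneg.2 htε)
        (by linarith : (0:ℝ) ≤ ε + t)) hapos.le,
        mul_nonneg (sub_nonneg.2 htε) hy₀.le]
    rw [abs_le]; exact ⟨hlow, hhigh⟩
  · rw [hy]; positivity
  · intro t
    have hder : HasDerivAt y a t := by
      rw [hy]; simpa using ((hasDerivAt_id t).mul_const a).add_const y₀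
    have hsum : f (y t, z t) + u t = a := by rw [hu]; ring
    rw [hsum]; exact hder
  · rw [hu]
    have hcy : Continuous y := by rw [hy]; continuity
    have hcz : Continuous z := by rw [hz]; continuity
    exact continuous_const.sub (hf.continuous.comp (hcy.prodMk hcz))
end

section
/- Let f: ℝ × [-1,1] → ℝ be locally Lipschitz, y₀ ≥ 0, and T̃ > 0. Then the functions y(t) = -y₀t/T̃ + y₀ and z(t) = 1 satisfy y(T̃) = 0, y(t) ≥ 0 for t ∈ [0,T̃], and the pair (y,z) is a solution of the differential inclusion ẏ = f(y,z) + u, y ∈ ż + ∂g(z) with continuous control u(t) = -y₀/T̃ - f(y(t),1), where g is the characteristic function of [-1,1]. In particular the state (y₀,1) can be steered to (0,1) in any prescribed time. -/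
/-- The subdifferential of the characteristic function of `[-1,1]` at a point
`z ∈ [-1,1]`. -/
def subgIcc (z : ℝ) : Set ℝ := {ξ : ℝ | ∀ w ∈ Set.Icc (-1 : ℝ) 1, ξ * (w - z) ≤ 0}

/-- Steering along the plastic boundary `z = 1`: with `y t = -y₀ t / T̃ + y₀` and
`z ≡ 1`, the pair `(y, z)` solves the differential inclusion
`ẏ = f(y,z) + u`, `y ∈ ż + ∂g(z)` with continuous control
`u t = -y₀/T̃ - f (y t, 1)`, and `(y₀, 1)` is steered to `(0, 1)` in time `T̃`. -/
theorem steer_along_plastic_boundary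
    (f : ℝ × ℝ → ℝ) (hf : LocallyLipschitz f)
    (y₀ T' : ℝ) (hy₀ : 0 ≤ y₀) (hT' : 0 < T') :
    ∀ y z u : ℝ → ℝ,
      y = (fun t => -(y₀ * t) / T' + y₀) →
      z = (fun _ => (1 : ℝ)) →
      u = (fun t => -(y₀ / T') - f (y t, 1)) →
      y T' = 0 ∧
      (∀ t ∈ Set.Icc 0 T', 0 ≤ y t) ∧
      (∀ t : ℝ, HasDerivAt y (f (y t, z t) + u t) t) ∧
      (∀ t : ℝ, HasDerivAt z 0 t) ∧
      (∀ t ∈ Set.Icc 0 T', y t - 0 ∈ subgIcc (z t)) ∧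
      Continuous u := by
  intro y z u hy hz hu
  subst hy hz hu
  refine ⟨by field_simp; ring, ?_, ?_, ?_, ?_, ?_⟩
  · rintro t ⟨ht0, ht1⟩
    show 0 ≤ -(y₀ * t) / T' + y₀
    rw [div_add' _ _ _ (ne_of_gt hT')]
    apply div_nonneg _ hT'.le; nlinarith
  · intro t
    have h : HasDerivAt (fun t => -(y₀ * t) / T' + y₀) (-(y₀ / T')) t := by
      have : HasDerivAt (fun t : ℝ => t) 1 t := hasDerivAt_id t
      simpa [div_eq_mul_inv, mul_comm, mul_assoc, neg_mul] using
        (((this.const_mul y₀).neg.div_const T').add_const y₀)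
    convert h using 1
    ring
  · intro t; simpa using hasDerivAt_const t (1:ℝ)
  · rintro t ⟨ht0, ht1⟩ w ⟨hw0, hw1⟩
    have hy : 0 ≤ -(y₀ * t) / T' + y₀ := by
      rw [div_add' _ _ _ (ne_of_gt hT')]
      apply div_nonneg _ hT'.le; nlinarith
    nlinarith
  · have hc : Continuous fun t => -(y₀ * t) / T' + y₀ := by continuity
    exact (continuous_const.sub ((hf.continuous).comp (hc.prodMk continuous_const)))
end

section
/- Let M = ℝ × [-1,1] and let f: M → ℝ be locally Lipschitz with y f(y,z) ≤ -α y² + C for all (y,z) ∈ M, where α, C > 0. Then for any T > 0, any initial state (y₀, z₀) ∈ M, and any target (y_T, z_T) with y_T ≠ 0 and z_T ∈ (-1,1), there exists a continuous control u ∈ C([0,T];ℝ) such that the solution of the constrained system ẏ = f(y,z) + u, y ∈ ż + ∂g(z), (y,z)(0) = (y₀,z₀) satisfies (y,z)(T) = (y_T, z_T), where g is the characteristic function of [-1,1]. -/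
open MeasureTheory

namespace EPaux

open Set

/-- five-piece piecewise function -/
noncomputable def pw (a b c d : ℝ) (f1 f2 f3 f4 f5 : ℝ → ℝ) (t : ℝ) : ℝ :=
  if t ≤ a then f1 t else if t ≤ b then f2 t else if t ≤ c then f3 t
    else if t ≤ d then f4 t else f5 t

variable {a b c d : ℝ} {f1 f2 f3 f4 f5 : ℝ → ℝ}

lemma pw_eq1 {t : ℝ} (h : t ≤ a) : pw a b c d f1 f2 f3 f4 f5 t = f1 t := by
  simp [pw, h]

lemma pw_eq2 {t : ℝ} (h1 : ¬ t ≤ a) (h2 : t ≤ b) : pw a b c d f1 f2 f3 f4 f5 t = f2 t := by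
  simp [pw, h1, h2]

lemma pw_eq3 {t : ℝ} (h1 : ¬ t ≤ a) (h2 : ¬ t ≤ b) (h3 : t ≤ c) :
    pw a b c d f1 f2 f3 f4 f5 t = f3 t := by
  simp [pw, h1, h2, h3]

lemma pw_eq4 {t : ℝ} (h1 : ¬ t ≤ a) (h2 : ¬ t ≤ b) (h3 : ¬ t ≤ c) (h4 : t ≤ d) :
    pw a b c d f1 f2 f3 f4 f5 t = f4 t := by
  simp [pw, h1, h2, h3, h4]

lemma pw_eq5 {t : ℝ} (h1 : ¬ t ≤ a) (h2 : ¬ t ≤ b) (h3 : ¬ t ≤ c) (h4 : ¬ t ≤ d) :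
    pw a b c d f1 f2 f3 f4 f5 t = f5 t := by
  simp [pw, h1, h2, h3, h4]

lemma pw_continuous (hab : a ≤ b) (hbc : b ≤ c) (hcd : c ≤ d)
    (h1 : Continuous f1) (h2 : Continuous f2) (h3 : Continuous f3) (h4 : Continuous f4)
    (h5 : Continuous f5)
    (e1 : f1 a = f2 a) (e2 : f2 b = f3 b) (e3 : f3 c = f4 c) (e4 : f4 d = f5 d) :
    Continuous (pw a b c d f1 f2 f3 f4 f5) := by
  unfold pw
  apply Continuous.if_le h1 _ continuous_id continuous_const
  · intro x hx
    simp only [id_eq] at hx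
    subst hx
    rw [e1, if_pos hab]
  apply Continuous.if_le h2 _ continuous_id continuous_const
  · intro x hx
    simp only [id_eq] at hx
    subst hx
    rw [e2, if_pos hbc]
  apply Continuous.if_le h3 _ continuous_id continuous_const
  · intro x hx
    simp only [id_eq] at hx
    subst hx
    rw [e3, if_pos hcd]
  exact Continuous.if_le h4 h5 continuous_id continuous_const
    fun x hx => by replace hx : x = d := hx; subst hx; exact e4

lemma pw_eqOn1 : EqOn (pw a b c d f1 f2 f3 f4 f5) f1 (Icc 0 a) := fun _ ht => pw_eq1 ht.2

lemma pw_eqOn2 (e1 : f1 a = f2 a) : EqOn (pw a b c d f1 f2 f3 f4 f5) f2 (Icc a b) := by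
  intro t ht
  by_cases h : t ≤ a
  · have : t = a := le_antisymm h ht.1
    rw [pw_eq1 h, this, e1]
  · exact pw_eq2 h ht.2

lemma pw_eqOn3 (hab : a ≤ b) (e1 : f1 a = f2 a) (e2 : f2 b = f3 b) :
    EqOn (pw a b c d f1 f2 f3 f4 f5) f3 (Icc b c) := by
  intro t ht
  by_cases h2 : t ≤ b
  · have htb : t = b := le_antisymm h2 ht.1
    subst htb
    by_cases h1 : t ≤ a
    · have : t = a := le_antisymm h1 (hab.trans ht.1)
      rw [pw_eq1 h1, this, e1, ← this, e2]
    · rw [pw_eq2 h1 le_rfl, e2]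
  · exact pw_eq3 (fun h => h2 (h.trans hab)) h2 ht.2

lemma pw_eqOn4 (hab : a ≤ b) (hbc : b ≤ c) (e1 : f1 a = f2 a) (e2 : f2 b = f3 b)
    (e3 : f3 c = f4 c) :
    EqOn (pw a b c d f1 f2 f3 f4 f5) f4 (Icc c d) := by
  intro t ht
  by_cases h3 : t ≤ c
  · have htc : t = c := le_antisymm h3 ht.1
    subst htc
    rw [pw_eqOn3 hab e1 e2 ⟨hbc, le_rfl⟩, e3]
  · exact pw_eq4 (fun h => h3 (h.trans (hab.trans hbc))) (fun h => h3 (h.trans hbc)) h3 ht.2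

lemma pw_eqOn5 {e : ℝ} (hab : a ≤ b) (hbc : b ≤ c) (hcd : c ≤ d) (e1 : f1 a = f2 a)
    (e2 : f2 b = f3 b) (e3 : f3 c = f4 c) (e4 : f4 d = f5 d) :
    EqOn (pw a b c d f1 f2 f3 f4 f5) f5 (Icc d e) := by
  intro t ht
  by_cases h4 : t ≤ d
  · have htd : t = d := le_antisymm h4 ht.1
    subst htd
    rw [pw_eqOn4 hab hbc e1 e2 e3 ⟨hcd, le_rfl⟩, e4]
  · exact pw_eq5 (fun h => h4 (h.trans (hab.trans (hbc.trans hcd))))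
      (fun h => h4 (h.trans (hbc.trans hcd))) (fun h => h4 (h.trans hcd)) h4

/-- Lipschitz-type bound on a segment from a derivative bound. -/
lemma pieceP {f g : ℝ → ℝ} {M p q : ℝ}
    (hd : ∀ t, HasDerivAt f (g t) t) (hb : ∀ t ∈ Icc p q, |g t| ≤ M) :
    ∀ x ∈ Icc p q, ∀ y ∈ Icc p q, dist (f x) (f y) ≤ M * dist x y := by
  intro x hx y hy
  rw [dist_eq_norm, dist_eq_norm]
  exact (convex_Icc p q).norm_image_sub_le_of_norm_hasDerivWithin_le
    (fun t _ => (hd t).hasDerivWithinAt) (fun t ht => by simpa using hb t ht) hy hx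

/-- transfer the dist bound along an `EqOn` -/
lemma transferP {f F : ℝ → ℝ} {M p q : ℝ} (hEq : EqOn f F (Icc p q))
    (hP : ∀ x ∈ Icc p q, ∀ y ∈ Icc p q, dist (F x) (F y) ≤ M * dist x y) :
    ∀ x ∈ Icc p q, ∀ y ∈ Icc p q, dist (f x) (f y) ≤ M * dist x y := by
  intro x hx y hy
  rw [hEq hx, hEq hy]
  exact hP x hx y hy

/-- glue two dist-Lipschitz bounds on adjacent intervals -/
lemma glueP {f : ℝ → ℝ} {M p q r : ℝ} (hpq : p ≤ q) (hqr : q ≤ r)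
    (h1 : ∀ x ∈ Icc p q, ∀ y ∈ Icc p q, dist (f x) (f y) ≤ M * dist x y)
    (h2 : ∀ x ∈ Icc q r, ∀ y ∈ Icc q r, dist (f x) (f y) ≤ M * dist x y) :
    ∀ x ∈ Icc p r, ∀ y ∈ Icc p r, dist (f x) (f y) ≤ M * dist x y := by
  have key : ∀ x ∈ Icc p r, ∀ y ∈ Icc p r, x ≤ y → dist (f x) (f y) ≤ M * dist x y := by
    intro x hx y hy hxy
    by_cases hyq : y ≤ q
    · exact h1 x ⟨hx.1, hxy.trans hyq⟩ y ⟨hx.1.trans hxy, hyq⟩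
    by_cases hxq : q ≤ x
    · exact h2 x ⟨hxq, hx.2⟩ y ⟨hxq.trans hxy, hy.2⟩
    push_neg at hyq hxq
    have b1 := h1 x ⟨hx.1, hxq.le⟩ q ⟨hpq, le_rfl⟩
    have b2 := h2 q ⟨le_rfl, hqr⟩ y ⟨hyq.le, hy.2⟩
    calc dist (f x) (f y) ≤ dist (f x) (f q) + dist (f q) (f y) := dist_triangle _ _ _
      _ ≤ M * dist x q + M * dist q y := add_le_add b1 b2
      _ = M * (dist x q + dist q y) := by ring
      _ = M * dist x y := by
          rw [Real.dist_eq, Real.dist_eq, Real.dist_eq,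
            abs_of_nonpos (by linarith), abs_of_nonpos (by linarith),
            abs_of_nonpos (by linarith)]
          ring
  intro x hx y hy
  rcases le_total x y with h | h
  · exact key x hx y hy h
  · rw [dist_comm, dist_comm x y]
    exact key y hy x hx h

lemma hd1y (y₀ τ t : ℝ) :
    HasDerivAt (fun t => y₀ * (1 - t/τ)^2) (-(2*y₀/τ) * (1 - t/τ)) t := by
  have hs : HasDerivAt (fun x : ℝ => 1 - x/τ) (-(1/τ)) t :=
    ((hasDerivAt_id t).div_const τ).const_sub 1
  have := (hs.pow 2).const_mul y₀
  refine this.congr_deriv ?_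
  push_cast
  ring

lemma hd1z (z₀ A τ t : ℝ) :
    HasDerivAt (fun t => z₀ + A * (1 - (1 - t/τ)^3)) (3*A/τ * (1 - t/τ)^2) t := by
  have hs : HasDerivAt (fun x : ℝ => 1 - x/τ) (-(1/τ)) t :=
    ((hasDerivAt_id t).div_const τ).const_sub 1
  have := (((hs.pow 3).const_sub 1).const_mul A).const_add z₀
  refine this.congr_deriv ?_
  push_cast
  ring

lemma hd3y (cc e h t : ℝ) :
    HasDerivAt (fun t => cc * (30*((t-e)/h)^2 - 60*((t-e)/h)^3 + 30*((t-e)/h)^4))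
      (cc/h * (60*((t-e)/h) - 180*((t-e)/h)^2 + 120*((t-e)/h)^3)) t := by
  have hs : HasDerivAt (fun x : ℝ => (x-e)/h) (1/h) t :=
    ((hasDerivAt_id t).sub_const e).div_const h
  have := ((((hs.pow 2).const_mul 30).sub ((hs.pow 3).const_mul 60)).add
    ((hs.pow 4).const_mul 30)).const_mul cc
  refine this.congr_deriv ?_
  push_cast
  ring

lemma hd3z (z₁ cc e h t : ℝ) :
    HasDerivAt (fun t => z₁ + cc * (10*((t-e)/h)^3 - 15*((t-e)/h)^4 + 6*((t-e)/h)^5))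
      (cc/h * (30*((t-e)/h)^2 - 60*((t-e)/h)^3 + 30*((t-e)/h)^4)) t := by
  have hs : HasDerivAt (fun x : ℝ => (x-e)/h) (1/h) t :=
    ((hasDerivAt_id t).sub_const e).div_const h
  have := (((((hs.pow 3).const_mul 10).sub ((hs.pow 4).const_mul 15)).add
    ((hs.pow 5).const_mul 6)).const_mul cc).const_add z₁
  refine this.congr_deriv ?_
  push_cast
  ring

lemma hd5y (yT e h t : ℝ) :
    HasDerivAt (fun t => yT * (4*((t-e)/h)^3 - 3*((t-e)/h)^2))
      (yT/h * (12*((t-e)/h)^2 - 6*((t-e)/h))) t := by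
  have hs : HasDerivAt (fun x : ℝ => (x-e)/h) (1/h) t :=
    ((hasDerivAt_id t).sub_const e).div_const h
  have := (((hs.pow 3).const_mul 4).sub ((hs.pow 2).const_mul 3)).const_mul yT
  refine this.congr_deriv ?_
  push_cast
  ring

lemma hd5z (zT yT e h : ℝ) (hh : h ≠ 0) (t : ℝ) :
    HasDerivAt (fun t => zT + yT * h * (((t-e)/h)^4 - ((t-e)/h)^3))
      (yT * (4*((t-e)/h)^3 - 3*((t-e)/h)^2)) t := by
  have hs : HasDerivAt (fun x : ℝ => (x-e)/h) (1/h) t :=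
    ((hasDerivAt_id t).sub_const e).div_const h
  have := (((hs.pow 4).sub (hs.pow 3)).const_mul (yT * h)).const_add zT
  refine this.congr_deriv ?_
  push_cast
  field_simp

lemma convex_bound {p q θ : ℝ} (hp : p ∈ Icc (-1:ℝ) 1) (hq : q ∈ Icc (-1:ℝ) 1)
    (h0 : 0 ≤ θ) (h1 : θ ≤ 1) : p + (q - p) * θ ∈ Icc (-1:ℝ) 1 := by
  obtain ⟨hp1, hp2⟩ := hp
  obtain ⟨hq1, hq2⟩ := hq
  constructor
  · nlinarith [mul_nonneg h0 (by linarith : (0:ℝ) ≤ q + 1),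
      mul_nonneg (by linarith : (0:ℝ) ≤ 1 - θ) (by linarith : (0:ℝ) ≤ p + 1)]
  · nlinarith [mul_nonneg h0 (by linarith : (0:ℝ) ≤ 1 - q),
      mul_nonneg (by linarith : (0:ℝ) ≤ 1 - θ) (by linarith : (0:ℝ) ≤ 1 - p)]

lemma smoothstep_mem {s : ℝ} (h0 : 0 ≤ s) (h1 : s ≤ 1) :
    10*s^3 - 15*s^4 + 6*s^5 ∈ Icc (0:ℝ) 1 := by
  constructor
  · have e : 10*s^3 - 15*s^4 + 6*s^5 = s^3 * (6*s^2 - 15*s + 10) := by ring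
    rw [e]
    exact mul_nonneg (pow_nonneg h0 3) (by nlinarith [sq_nonneg (s - 5/4)])
  · have e : 1 - (10*s^3 - 15*s^4 + 6*s^5) = (1-s)^3 * (6*s^2 + 3*s + 1) := by ring
    nlinarith [mul_nonneg (pow_nonneg (by linarith : (0:ℝ) ≤ 1 - s) 3)
      (by nlinarith [sq_nonneg s] : (0:ℝ) ≤ 6*s^2 + 3*s + 1)]

lemma cube_mem {v : ℝ} (h0 : 0 ≤ v) (h1 : v ≤ 1) : 1 - v^3 ∈ Icc (0:ℝ) 1 := by
  constructor
  · nlinarith [pow_le_one₀ h0 h1 (n := 3)]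
  · nlinarith [pow_nonneg h0 3]

lemma abs_G5_le {s : ℝ} (h0 : 0 ≤ s) (h1 : s ≤ 1) : |s^4 - s^3| ≤ 1 := by
  rw [abs_le]
  constructor <;> nlinarith [pow_nonneg h0 3, pow_le_one₀ h0 h1 (n := 3),
    mul_nonneg (pow_nonneg h0 3) (by linarith : (0:ℝ) ≤ 1 - s),
    mul_le_one₀ (pow_le_one₀ h0 h1 (n := 3)) (by linarith : (0:ℝ) ≤ 1 - s)
      (by linarith : 1 - s ≤ 1)]

lemma bnd_aux {s : ℝ} (h0 : 0 ≤ s) (h1 : s ≤ 1) :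
    s^2 ≤ 1 ∧ s^3 ≤ 1 ∧ s^4 ≤ 1 ∧ s^5 ≤ 1 ∧ 0 ≤ s^2 ∧ 0 ≤ s^3 ∧ 0 ≤ s^4 ∧ 0 ≤ s^5 :=
  ⟨pow_le_one₀ h0 h1, pow_le_one₀ h0 h1, pow_le_one₀ h0 h1, pow_le_one₀ h0 h1,
    pow_nonneg h0 2, pow_nonneg h0 3, pow_nonneg h0 4, pow_nonneg h0 5⟩

lemma bnd3y {s : ℝ} (h0 : 0 ≤ s) (h1 : s ≤ 1) : |60*s - 180*s^2 + 120*s^3| ≤ 360 := by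
  obtain ⟨a1, a2, a3, a4, b1, b2, b3, b4⟩ := bnd_aux h0 h1
  rw [abs_le]; constructor <;> nlinarith

lemma bnd3z {s : ℝ} (h0 : 0 ≤ s) (h1 : s ≤ 1) : |30*s^2 - 60*s^3 + 30*s^4| ≤ 120 := by
  obtain ⟨a1, a2, a3, a4, b1, b2, b3, b4⟩ := bnd_aux h0 h1
  rw [abs_le]; constructor <;> nlinarith

lemma bnd5y {s : ℝ} (h0 : 0 ≤ s) (h1 : s ≤ 1) : |12*s^2 - 6*s| ≤ 18 := by
  obtain ⟨a1, a2, a3, a4, b1, b2, b3, b4⟩ := bnd_aux h0 h1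
  rw [abs_le]; constructor <;> nlinarith

lemma bnd5z {s : ℝ} (h0 : 0 ≤ s) (h1 : s ≤ 1) : |4*s^3 - 3*s^2| ≤ 7 := by
  obtain ⟨a1, a2, a3, a4, b1, b2, b3, b4⟩ := bnd_aux h0 h1
  rw [abs_le]; constructor <;> nlinarith

lemma zero_mem_subg (zz : ℝ) : (0:ℝ) ∈ subgIcc zz := fun w _ => by simp

end EPaux

set_option maxHeartbeats 2000000 in
/-- Global exact controllability of the elasto-plastic differential inclusion
`ẏ = f(y,z) + u`, `y ∈ ż + ∂g(z)`: any initial state `(y₀, z₀) ∈ ℝ × [-1,1]` can be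
steered in any time `T > 0` to any target `(y_T, z_T)` with `y_T ≠ 0`, `z_T ∈ (-1,1)`
by a continuous control. -/
theorem elastoplastic_exact_controllability
    (f : ℝ × ℝ → ℝ) (hf : LocallyLipschitz f)
    (α C : ℝ) (hα : 0 < α) (hC : 0 < C)
    (hdiss : ∀ y z : ℝ, z ∈ Set.Icc (-1 : ℝ) 1 → y * f (y, z) ≤ -α * y ^ 2 + C)
    (T : ℝ) (hT : 0 < T)
    (y₀ z₀ : ℝ) (hz₀ : z₀ ∈ Set.Icc (-1 : ℝ) 1)
    (yT zT : ℝ) (hyT : yT ≠ 0) (hzT : zT ∈ Set.Ioo (-1 : ℝ) 1) :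
    ∃ u : ℝ → ℝ, ContinuousOn u (Set.Icc 0 T) ∧
      ∃ y z ξ : ℝ → ℝ, ∃ L : NNReal,
        y 0 = y₀ ∧ z 0 = z₀ ∧
        LipschitzOnWith L y (Set.Icc 0 T) ∧ LipschitzOnWith L z (Set.Icc 0 T) ∧
        (∀ t ∈ Set.Icc (0 : ℝ) T, z t ∈ Set.Icc (-1 : ℝ) 1) ∧
        (∀ t ∈ Set.Icc (0 : ℝ) T, ξ t ∈ subgIcc (z t)) ∧
        (∀ᵐ t ∂(volume.restrict (Set.Icc (0 : ℝ) T)),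
          HasDerivAt y (f (y t, z t) + u t) t ∧ HasDerivAt z (y t - ξ t) t) ∧
        y T = yT ∧ z T = zT := by
  classical
  obtain ⟨hzT1, hzT2⟩ := hzT
  obtain ⟨hz01, hz02⟩ := hz₀
  have hT3 : (0:ℝ) < T/3 := by linarith
  -- phase-1 data
  set D : ℝ := if 0 ≤ y₀ then 1 - z₀ else z₀ + 1 with hDdef
  have hD0 : 0 ≤ D := by rw [hDdef]; split <;> linarith
  set τ : ℝ := if y₀ = 0 ∨ D = 0 then T/3 else min (T/3) (3*D/|y₀|) with hτdef
  have hτpos : 0 < τ := by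
    rw [hτdef]; split
    · exact hT3
    · next hc =>
      push_neg at hc
      have hDpos : 0 < D := lt_of_le_of_ne hD0 (Ne.symm hc.2)
      have hy0 : 0 < |y₀| := abs_pos.2 hc.1
      exact lt_min hT3 (by positivity)
  have hτle : τ ≤ T/3 := by rw [hτdef]; split; exacts [le_rfl, min_le_left _ _]
  set A : ℝ := if y₀ = 0 ∨ D = 0 then 0 else y₀ * τ / 3 with hAdef
  have hz1mem : z₀ + A ∈ Set.Icc (-1:ℝ) 1 := by
    rw [hAdef]
    split
    · simp only [add_zero, Set.mem_Icc]; exact ⟨hz01, hz02⟩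
    · next hc =>
      have hτ3 : τ ≤ 3*D/|y₀| := by
        rw [hτdef, if_neg hc]; exact min_le_right _ _
      push_neg at hc
      obtain ⟨hy0ne, hDne⟩ := hc
      rcases lt_or_ge 0 y₀ with hpos | hneg
      · have habs : |y₀| = y₀ := abs_of_pos hpos
        rw [habs, le_div_iff₀ hpos] at hτ3
        have hcomm : τ * y₀ = y₀ * τ := mul_comm _ _
        rw [hcomm] at hτ3
        have hDval : D = 1 - z₀ := by rw [hDdef, if_pos hpos.le]
        rw [hDval] at hτ3
        have hnn : 0 ≤ y₀ * τ := mul_nonneg hpos.le hτpos.le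
        simp only [Set.mem_Icc]
        constructor <;> nlinarith
      · have hneg' : y₀ < 0 := lt_of_le_of_ne hneg hy0ne
        have habs : |y₀| = -y₀ := abs_of_neg hneg'
        rw [habs, le_div_iff₀ (by linarith : (0:ℝ) < -y₀)] at hτ3
        have hcomm : τ * -y₀ = -(y₀ * τ) := by ring
        rw [hcomm] at hτ3
        have hDval : D = z₀ + 1 := by rw [hDdef, if_neg (not_le.2 hneg')]
        rw [hDval] at hτ3
        have hnp : y₀ * τ < 0 := mul_neg_of_neg_of_pos hneg' hτpos
        simp only [Set.mem_Icc]
        constructor <;> nlinarith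
  -- final-phase data
  set dmin : ℝ := min (1 - zT) (zT + 1) with hdmindef
  have hdminpos : 0 < dmin := lt_min (by linarith) (by linarith)
  have hdmin1 : dmin ≤ 1 - zT := min_le_left _ _
  have hdmin2 : dmin ≤ zT + 1 := min_le_right _ _
  have hyTabs : 0 < |yT| := abs_pos.2 hyT
  set ε : ℝ := min (T/3) (dmin / |yT|) with hεdef
  have hεpos : 0 < ε := lt_min hT3 (by positivity)
  have hεle : ε ≤ T/3 := min_le_left _ _
  have hεd : ε * |yT| ≤ dmin := by
    have h2 : ε ≤ dmin / |yT| := min_le_right _ _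
    rwa [le_div_iff₀ hyTabs] at h2
  have hTm : 2*T/3 ≤ T - ε := by linarith
  -- the pieces
  set F1 : ℝ → ℝ := fun t => y₀ * (1 - t/τ)^2 with hF1
  set G1 : ℝ → ℝ := fun t => -(2*y₀/τ) * (1 - t/τ) with hG1
  set Z1 : ℝ → ℝ := fun t => z₀ + A * (1 - (1 - t/τ)^3) with hZ1
  set F3 : ℝ → ℝ := fun t => ((zT - (z₀+A))/(T/3)) *
    (30*((t-T/3)/(T/3))^2 - 60*((t-T/3)/(T/3))^3 + 30*((t-T/3)/(T/3))^4) with hF3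
  set G3 : ℝ → ℝ := fun t => ((zT - (z₀+A))/(T/3))/(T/3) *
    (60*((t-T/3)/(T/3)) - 180*((t-T/3)/(T/3))^2 + 120*((t-T/3)/(T/3))^3) with hG3
  set Z3 : ℝ → ℝ := fun t => (z₀+A) + (zT - (z₀+A)) *
    (10*((t-T/3)/(T/3))^3 - 15*((t-T/3)/(T/3))^4 + 6*((t-T/3)/(T/3))^5) with hZ3
  set F5 : ℝ → ℝ := fun t => yT * (4*((t-(T-ε))/ε)^3 - 3*((t-(T-ε))/ε)^2) with hF5
  set G5 : ℝ → ℝ := fun t => yT/ε * (12*((t-(T-ε))/ε)^2 - 6*((t-(T-ε))/ε)) with hG5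
  set Z5 : ℝ → ℝ := fun t => zT + yT * ε * (((t-(T-ε))/ε)^4 - ((t-(T-ε))/ε)^3) with hZ5
  set yy : ℝ → ℝ := EPaux.pw τ (T/3) (2*T/3) (T-ε) F1 (fun _ => 0) F3 (fun _ => 0) F5 with hyy
  set zz : ℝ → ℝ := EPaux.pw τ (T/3) (2*T/3) (T-ε) Z1 (fun _ => z₀+A) Z3 (fun _ => zT) Z5 with hzz
  set gg : ℝ → ℝ := EPaux.pw τ (T/3) (2*T/3) (T-ε) G1 (fun _ => 0) G3 (fun _ => 0) G5 with hgg
  set ξ : ℝ → ℝ := fun t => if t ≤ τ then (y₀ - 3*A/τ) * (1 - t/τ)^2 else 0 with hξ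
  set u : ℝ → ℝ := fun t => gg t - f (yy t, zz t) with hu
  -- junction values
  have hττ : (1 : ℝ) - τ/τ = 0 := by rw [div_self hτpos.ne']; ring
  have hs31 : ((T/3 : ℝ) - T/3)/(T/3) = 0 := by rw [sub_self, zero_div]
  have hs32 : ((2*T/3 : ℝ) - T/3)/(T/3) = 1 := by
    rw [show (2*T/3 : ℝ) - T/3 = T/3 by ring, div_self hT3.ne']
  have hs51 : ((T - ε : ℝ) - (T-ε))/ε = 0 := by rw [sub_self, zero_div]
  have hs52 : ((T : ℝ) - (T-ε))/ε = 1 := by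
    rw [show (T:ℝ) - (T-ε) = ε by ring, div_self hεpos.ne']
  have e1y : F1 τ = 0 := by simp only [hF1]; rw [hττ]; ring
  have e1z : Z1 τ = z₀ + A := by simp only [hZ1]; rw [hττ]; ring
  have e1g : G1 τ = 0 := by simp only [hG1]; rw [hττ]; ring
  have e2y : (0:ℝ) = F3 (T/3) := by simp only [hF3]; rw [hs31]; ring
  have e2z : z₀ + A = Z3 (T/3) := by simp only [hZ3]; rw [hs31]; ring
  have e2g : (0:ℝ) = G3 (T/3) := by simp only [hG3]; rw [hs31]; ring
  have e3y : F3 (2*T/3) = 0 := by simp only [hF3]; rw [hs32]; ring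
  have e3z : Z3 (2*T/3) = zT := by simp only [hZ3]; rw [hs32]; ring
  have e3g : G3 (2*T/3) = 0 := by simp only [hG3]; rw [hs32]; ring
  have e4y : (0:ℝ) = F5 (T-ε) := by simp only [hF5]; rw [hs51]; ring
  have e4z : zT = Z5 (T-ε) := by simp only [hZ5]; rw [hs51]; ring
  have e4g : (0:ℝ) = G5 (T-ε) := by simp only [hG5]; rw [hs51]; ring
  -- continuity
  have hF1c : Continuous F1 := by rw [hF1]; fun_prop
  have hG1c : Continuous G1 := by rw [hG1]; fun_prop
  have hZ1c : Continuous Z1 := by rw [hZ1]; fun_prop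
  have hF3c : Continuous F3 := by rw [hF3]; fun_prop
  have hG3c : Continuous G3 := by rw [hG3]; fun_prop
  have hZ3c : Continuous Z3 := by rw [hZ3]; fun_prop
  have hF5c : Continuous F5 := by rw [hF5]; fun_prop
  have hG5c : Continuous G5 := by rw [hG5]; fun_prop
  have hZ5c : Continuous Z5 := by rw [hZ5]; fun_prop
  have hT13 : (T/3 : ℝ) ≤ 2*T/3 := by linarith
  have hyc : Continuous yy := by
    rw [hyy]
    exact EPaux.pw_continuous hτle hT13 hTm hF1c continuous_const hF3c continuous_const hF5c
      e1y e2y e3y e4y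
  have hzc : Continuous zz := by
    rw [hzz]
    exact EPaux.pw_continuous hτle hT13 hTm hZ1c continuous_const hZ3c continuous_const hZ5c
      e1z e2z e3z e4z
  have hgc : Continuous gg := by
    rw [hgg]
    exact EPaux.pw_continuous hτle hT13 hTm hG1c continuous_const hG3c continuous_const hG5c
      e1g e2g e3g e4g
  have huc : ContinuousOn u (Set.Icc 0 T) := by
    rw [hu]
    exact (hgc.sub (hf.continuous.comp (hyc.prodMk hzc))).continuousOn
  -- the Lipschitz constant
  have m1 : 0 ≤ 2*|y₀|/τ := div_nonneg (by positivity) hτpos.le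
  have m2 : 0 ≤ 3*|A|/τ := div_nonneg (by positivity) hτpos.le
  have m3 : 0 ≤ |zT - (z₀+A)|/(T/3)/(T/3)*360 :=
    mul_nonneg (div_nonneg (div_nonneg (abs_nonneg _) hT3.le) hT3.le) (by norm_num)
  have m4 : 0 ≤ |zT - (z₀+A)|/(T/3)*120 :=
    mul_nonneg (div_nonneg (abs_nonneg _) hT3.le) (by norm_num)
  have m5 : 0 ≤ |yT|/ε*18 := mul_nonneg (div_nonneg (abs_nonneg _) hεpos.le) (by norm_num)
  have m6 : 0 ≤ |yT| * 7 := mul_nonneg (abs_nonneg _) (by norm_num)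
  set M : ℝ := 2*|y₀|/τ + 3*|A|/τ + |zT - (z₀+A)|/(T/3)/(T/3)*360 + |zT - (z₀+A)|/(T/3)*120
    + |yT|/ε*18 + |yT| * 7 with hMdef
  have hM0 : 0 ≤ M := by rw [hMdef]; linarith
  have Pconst : ∀ (cst p q : ℝ), ∀ x ∈ Set.Icc p q, ∀ x' ∈ Set.Icc p q,
      dist ((fun _ : ℝ => cst) x) ((fun _ : ℝ => cst) x') ≤ M * dist x x' := by
    intro cst p q x _ x' _
    simp only [dist_self]
    exact mul_nonneg hM0 dist_nonneg
  -- Lipschitz bound for yy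
  have Py1 : ∀ x ∈ Set.Icc 0 τ, ∀ x' ∈ Set.Icc 0 τ, dist (yy x) (yy x') ≤ M * dist x x' := by
    refine EPaux.transferP (by rw [hyy]; exact EPaux.pw_eqOn1)
      (EPaux.pieceP (fun t => EPaux.hd1y y₀ τ t) ?_)
    intro t ht
    have h1 : 0 ≤ t/τ := div_nonneg ht.1 hτpos.le
    have h2 : t/τ ≤ 1 := (div_le_one hτpos).2 ht.2
    have habs : |1 - t/τ| ≤ 1 := abs_le.2 ⟨by linarith, by linarith⟩
    calc |(-(2*y₀/τ)) * (1 - t/τ)| = 2*|y₀|/τ * |1 - t/τ| := by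
          rw [abs_mul, abs_neg, abs_div, abs_of_pos hτpos, abs_mul, abs_two]
      _ ≤ 2*|y₀|/τ * 1 := mul_le_mul_of_nonneg_left habs m1
      _ ≤ M := by rw [mul_one, hMdef]; linarith
  have Py2 : ∀ x ∈ Set.Icc τ (T/3), ∀ x' ∈ Set.Icc τ (T/3),
      dist (yy x) (yy x') ≤ M * dist x x' :=
    EPaux.transferP (by rw [hyy]; exact EPaux.pw_eqOn2 e1y) (Pconst 0 τ (T/3))
  have Py3 : ∀ x ∈ Set.Icc (T/3) (2*T/3), ∀ x' ∈ Set.Icc (T/3) (2*T/3),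
      dist (yy x) (yy x') ≤ M * dist x x' := by
    refine EPaux.transferP (by rw [hyy]; exact EPaux.pw_eqOn3 hτle e1y e2y)
      (EPaux.pieceP (fun t => EPaux.hd3y ((zT - (z₀+A))/(T/3)) (T/3) (T/3) t) ?_)
    intro t ht
    have h1 : 0 ≤ (t-T/3)/(T/3) := div_nonneg (by linarith [ht.1]) hT3.le
    have h2 : (t-T/3)/(T/3) ≤ 1 := (div_le_one hT3).2 (by linarith [ht.2])
    calc |((zT - (z₀+A))/(T/3))/(T/3) * (60*((t-T/3)/(T/3)) - 180*((t-T/3)/(T/3))^2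
            + 120*((t-T/3)/(T/3))^3)|
        = |zT - (z₀+A)|/(T/3)/(T/3) * |60*((t-T/3)/(T/3)) - 180*((t-T/3)/(T/3))^2
            + 120*((t-T/3)/(T/3))^3| := by
          rw [abs_mul, abs_div, abs_div, abs_of_pos hT3]
      _ ≤ |zT - (z₀+A)|/(T/3)/(T/3) * 360 :=
          mul_le_mul_of_nonneg_left (EPaux.bnd3y h1 h2)
            (div_nonneg (div_nonneg (abs_nonneg _) hT3.le) hT3.le)
      _ ≤ M := by rw [hMdef]; linarith
  have Py4 : ∀ x ∈ Set.Icc (2*T/3) (T-ε), ∀ x' ∈ Set.Icc (2*T/3) (T-ε),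
      dist (yy x) (yy x') ≤ M * dist x x' :=
    EPaux.transferP (by rw [hyy]; exact EPaux.pw_eqOn4 hτle hT13 e1y e2y e3y)
      (Pconst 0 (2*T/3) (T-ε))
  have Py5 : ∀ x ∈ Set.Icc (T-ε) T, ∀ x' ∈ Set.Icc (T-ε) T,
      dist (yy x) (yy x') ≤ M * dist x x' := by
    refine EPaux.transferP (by rw [hyy]; exact EPaux.pw_eqOn5 hτle hT13 hTm e1y e2y e3y e4y)
      (EPaux.pieceP (fun t => EPaux.hd5y yT (T-ε) ε t) ?_)
    intro t ht
    have h1 : 0 ≤ (t-(T-ε))/ε := div_nonneg (by linarith [ht.1]) hεpos.le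
    have h2 : (t-(T-ε))/ε ≤ 1 := (div_le_one hεpos).2 (by linarith [ht.2])
    calc |yT/ε * (12*((t-(T-ε))/ε)^2 - 6*((t-(T-ε))/ε))|
        = |yT|/ε * |12*((t-(T-ε))/ε)^2 - 6*((t-(T-ε))/ε)| := by
          rw [abs_mul, abs_div, abs_of_pos hεpos]
      _ ≤ |yT|/ε * 18 :=
          mul_le_mul_of_nonneg_left (EPaux.bnd5y h1 h2) (div_nonneg (abs_nonneg _) hεpos.le)
      _ ≤ M := by rw [hMdef]; linarith
  have Pybig : ∀ x ∈ Set.Icc 0 T, ∀ x' ∈ Set.Icc 0 T, dist (yy x) (yy x') ≤ M * dist x x' :=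
    EPaux.glueP (by linarith) (by linarith)
      (EPaux.glueP (by linarith) hTm
        (EPaux.glueP (by linarith) hT13 (EPaux.glueP hτpos.le hτle Py1 Py2) Py3) Py4) Py5
  -- Lipschitz bound for zz
  have Pz1 : ∀ x ∈ Set.Icc 0 τ, ∀ x' ∈ Set.Icc 0 τ, dist (zz x) (zz x') ≤ M * dist x x' := by
    refine EPaux.transferP (by rw [hzz]; exact EPaux.pw_eqOn1)
      (EPaux.pieceP (fun t => EPaux.hd1z z₀ A τ t) ?_)
    intro t ht
    have h1 : 0 ≤ t/τ := div_nonneg ht.1 hτpos.le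
    have h2 : t/τ ≤ 1 := (div_le_one hτpos).2 ht.2
    have habs : |1 - t/τ| ≤ 1 := abs_le.2 ⟨by linarith, by linarith⟩
    calc |3*A/τ * (1 - t/τ)^2| = 3*|A|/τ * |1 - t/τ|^2 := by
          rw [abs_mul, abs_div, abs_of_pos hτpos, abs_mul, abs_pow]
          norm_num
      _ ≤ 3*|A|/τ * 1 := by
          refine mul_le_mul_of_nonneg_left ?_ m2
          calc |1 - t/τ|^2 ≤ 1^2 := pow_le_pow_left₀ (abs_nonneg _) habs 2
            _ = 1 := one_pow 2
      _ ≤ M := by rw [mul_one, hMdef]; linarith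
  have Pz2 : ∀ x ∈ Set.Icc τ (T/3), ∀ x' ∈ Set.Icc τ (T/3),
      dist (zz x) (zz x') ≤ M * dist x x' :=
    EPaux.transferP (by rw [hzz]; exact EPaux.pw_eqOn2 e1z) (Pconst (z₀+A) τ (T/3))
  have Pz3 : ∀ x ∈ Set.Icc (T/3) (2*T/3), ∀ x' ∈ Set.Icc (T/3) (2*T/3),
      dist (zz x) (zz x') ≤ M * dist x x' := by
    refine EPaux.transferP (by rw [hzz]; exact EPaux.pw_eqOn3 hτle e1z e2z)
      (EPaux.pieceP (fun t => EPaux.hd3z (z₀+A) (zT - (z₀+A)) (T/3) (T/3) t) ?_)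
    intro t ht
    have h1 : 0 ≤ (t-T/3)/(T/3) := div_nonneg (by linarith [ht.1]) hT3.le
    have h2 : (t-T/3)/(T/3) ≤ 1 := (div_le_one hT3).2 (by linarith [ht.2])
    calc |(zT - (z₀+A))/(T/3) * (30*((t-T/3)/(T/3))^2 - 60*((t-T/3)/(T/3))^3
            + 30*((t-T/3)/(T/3))^4)|
        = |zT - (z₀+A)|/(T/3) * |30*((t-T/3)/(T/3))^2 - 60*((t-T/3)/(T/3))^3
            + 30*((t-T/3)/(T/3))^4| := by
          rw [abs_mul, abs_div, abs_of_pos hT3]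
      _ ≤ |zT - (z₀+A)|/(T/3) * 120 :=
          mul_le_mul_of_nonneg_left (EPaux.bnd3z h1 h2) (div_nonneg (abs_nonneg _) hT3.le)
      _ ≤ M := by rw [hMdef]; linarith
  have Pz4 : ∀ x ∈ Set.Icc (2*T/3) (T-ε), ∀ x' ∈ Set.Icc (2*T/3) (T-ε),
      dist (zz x) (zz x') ≤ M * dist x x' :=
    EPaux.transferP (by rw [hzz]; exact EPaux.pw_eqOn4 hτle hT13 e1z e2z e3z)
      (Pconst zT (2*T/3) (T-ε))
  have Pz5 : ∀ x ∈ Set.Icc (T-ε) T, ∀ x' ∈ Set.Icc (T-ε) T,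
      dist (zz x) (zz x') ≤ M * dist x x' := by
    refine EPaux.transferP (by rw [hzz]; exact EPaux.pw_eqOn5 hτle hT13 hTm e1z e2z e3z e4z)
      (EPaux.pieceP (fun t => EPaux.hd5z zT yT (T-ε) ε hεpos.ne' t) ?_)
    intro t ht
    have h1 : 0 ≤ (t-(T-ε))/ε := div_nonneg (by linarith [ht.1]) hεpos.le
    have h2 : (t-(T-ε))/ε ≤ 1 := (div_le_one hεpos).2 (by linarith [ht.2])
    calc |yT * (4*((t-(T-ε))/ε)^3 - 3*((t-(T-ε))/ε)^2)|
        = |yT| * |4*((t-(T-ε))/ε)^3 - 3*((t-(T-ε))/ε)^2| := by rw [abs_mul]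
      _ ≤ |yT| * 7 := mul_le_mul_of_nonneg_left (EPaux.bnd5z h1 h2) (abs_nonneg _)
      _ ≤ M := by rw [hMdef]; linarith
  have Pzbig : ∀ x ∈ Set.Icc 0 T, ∀ x' ∈ Set.Icc 0 T, dist (zz x) (zz x') ≤ M * dist x x' :=
    EPaux.glueP (by linarith) (by linarith)
      (EPaux.glueP (by linarith) hTm
        (EPaux.glueP (by linarith) hT13 (EPaux.glueP hτpos.le hτle Pz1 Pz2) Pz3) Pz4) Pz5
  refine ⟨u, huc, yy, zz, ξ, Real.toNNReal M, ?_, ?_, ?_, ?_, ?_, ?_, ?_, ?_, ?_⟩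
  · -- yy 0 = y₀
    rw [hyy, EPaux.pw_eq1 hτpos.le]
    simp [hF1]
  · -- zz 0 = z₀
    rw [hzz, EPaux.pw_eq1 hτpos.le]
    simp [hZ1]
  · -- Lipschitz yy
    rw [lipschitzOnWith_iff_dist_le_mul]
    intro x hx x' hx'
    rw [Real.coe_toNNReal M hM0]
    exact Pybig x hx x' hx'
  · -- Lipschitz zz
    rw [lipschitzOnWith_iff_dist_le_mul]
    intro x hx x' hx'
    rw [Real.coe_toNNReal M hM0]
    exact Pzbig x hx x' hx'
  · -- range of zz
    rintro t ⟨ht0, htT⟩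
    by_cases h1 : t ≤ τ
    · rw [hzz, EPaux.pw_eq1 h1]
      simp only [hZ1]
      have hv1 : 0 ≤ 1 - t/τ := by
        have := (div_le_one hτpos).2 h1
        linarith
      have hv2 : 1 - t/τ ≤ 1 := by
        have := div_nonneg ht0 hτpos.le
        linarith
      have hθ := EPaux.cube_mem hv1 hv2
      have hrw : z₀ + A * (1 - (1 - t/τ)^3) = z₀ + ((z₀ + A) - z₀) * (1 - (1-t/τ)^3) := by ring
      rw [hrw]
      exact EPaux.convex_bound (Set.mem_Icc.2 ⟨hz01, hz02⟩) hz1mem hθ.1 hθ.2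
    by_cases h2 : t ≤ T/3
    · rw [hzz, EPaux.pw_eq2 h1 h2]
      exact hz1mem
    by_cases h3 : t ≤ 2*T/3
    · rw [hzz, EPaux.pw_eq3 h1 h2 h3]
      simp only [hZ3]
      have hs1 : 0 ≤ (t-T/3)/(T/3) := div_nonneg (by push_neg at h2; linarith) hT3.le
      have hs2 : (t-T/3)/(T/3) ≤ 1 := (div_le_one hT3).2 (by linarith)
      have hB := EPaux.smoothstep_mem hs1 hs2
      exact EPaux.convex_bound hz1mem (Set.mem_Icc.2 ⟨hzT1.le, hzT2.le⟩) hB.1 hB.2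
    by_cases h4 : t ≤ T - ε
    · rw [hzz, EPaux.pw_eq4 h1 h2 h3 h4]
      exact Set.mem_Icc.2 ⟨hzT1.le, hzT2.le⟩
    · rw [hzz, EPaux.pw_eq5 h1 h2 h3 h4]
      simp only [hZ5]
      have hs1 : 0 ≤ (t-(T-ε))/ε := div_nonneg (by push_neg at h4; linarith) hεpos.le
      have hs2 : (t-(T-ε))/ε ≤ 1 := (div_le_one hεpos).2 (by linarith)
      have hb : |yT * ε * (((t-(T-ε))/ε)^4 - ((t-(T-ε))/ε)^3)| ≤ dmin := by
        calc |yT * ε * (((t-(T-ε))/ε)^4 - ((t-(T-ε))/ε)^3)|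
            = |yT| * ε * |((t-(T-ε))/ε)^4 - ((t-(T-ε))/ε)^3| := by
              rw [abs_mul, abs_mul, abs_of_pos hεpos]
          _ ≤ |yT| * ε * 1 :=
              mul_le_mul_of_nonneg_left (EPaux.abs_G5_le hs1 hs2)
                (mul_nonneg (abs_nonneg _) hεpos.le)
          _ = ε * |yT| := by ring
          _ ≤ dmin := hεd
      obtain ⟨hbl, hbr⟩ := abs_le.1 hb
      exact Set.mem_Icc.2 ⟨by linarith, by linarith⟩
  · -- ξ ∈ ∂g(z)
    rintro t ⟨ht0, htT⟩
    by_cases hle : t ≤ τ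
    · simp only [hξ, if_pos hle]
      by_cases hc : y₀ = 0 ∨ D = 0
      · have hA0 : A = 0 := by rw [hAdef, if_pos hc]
        have hzt : zz t = z₀ := by
          rw [hzz, EPaux.pw_eq1 hle]
          simp [hZ1, hA0]
        rw [hzt, hA0]
        rcases hc with hy0 | hD0'
        · have hrw : (y₀ - 3*(0:ℝ)/τ) * (1 - t/τ)^2 = 0 := by rw [hy0]; ring
          rw [hrw]
          exact EPaux.zero_mem_subg z₀
        · rcases le_or_gt 0 y₀ with hsgn | hsgn
          · have hz01' : z₀ = 1 := by
              rw [hDdef, if_pos hsgn] at hD0'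
              linarith
            intro w hw
            obtain ⟨hw1, hw2⟩ := Set.mem_Icc.1 hw
            rw [hz01']
            have hξpos : 0 ≤ (y₀ - 3*(0:ℝ)/τ) * (1 - t/τ)^2 := by
              have hrw : y₀ - 3*(0:ℝ)/τ = y₀ := by ring
              rw [hrw]
              exact mul_nonneg hsgn (sq_nonneg _)
            exact mul_nonpos_iff.2 (Or.inl ⟨hξpos, by linarith⟩)
          · have hz01' : z₀ = -1 := by
              rw [hDdef, if_neg (not_le.2 hsgn)] at hD0'
              linarith
            intro w hw
            obtain ⟨hw1, hw2⟩ := Set.mem_Icc.1 hw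
            rw [hz01']
            have hξneg : (y₀ - 3*(0:ℝ)/τ) * (1 - t/τ)^2 ≤ 0 := by
              have hrw : y₀ - 3*(0:ℝ)/τ = y₀ := by ring
              rw [hrw]
              exact mul_nonpos_iff.2 (Or.inr ⟨hsgn.le, sq_nonneg _⟩)
            exact mul_nonpos_iff.2 (Or.inr ⟨hξneg, by linarith⟩)
      · have hA' : A = y₀ * τ / 3 := by rw [hAdef, if_neg hc]
        have hrw : y₀ - 3*A/τ = 0 := by
          rw [hA']
          field_simp
          ring
        rw [hrw, zero_mul]
        exact EPaux.zero_mem_subg _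
    · simp only [hξ, if_neg hle]
      exact EPaux.zero_mem_subg _
  · -- a.e. differential equations
    have hJ0 : volume ({0, τ, T/3, 2*T/3, T-ε, T} : Set ℝ) = 0 :=
      (Set.toFinite _).measure_zero _
    have hae1 : ∀ᵐ t ∂(volume.restrict (Set.Icc (0:ℝ) T)),
        t ∉ ({0, τ, T/3, 2*T/3, T-ε, T} : Set ℝ) :=
      ae_restrict_of_ae (measure_eq_zero_iff_ae_notMem.mp hJ0)
    have hae2 : ∀ᵐ t ∂(volume.restrict (Set.Icc (0:ℝ) T)), t ∈ Set.Icc (0:ℝ) T :=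
      ae_restrict_mem measurableSet_Icc
    filter_upwards [hae1, hae2] with t htJ htI
    simp only [Set.mem_insert_iff, Set.mem_singleton_iff, not_or] at htJ
    obtain ⟨hn0, hnτ, hn1, hn2, hnm, hnT⟩ := htJ
    obtain ⟨ht0, htT⟩ := htI
    have ht0' : 0 < t := lt_of_le_of_ne ht0 (Ne.symm hn0)
    have htT' : t < T := lt_of_le_of_ne htT hnT
    have hsum : f (yy t, zz t) + u t = gg t := by simp only [hu]; ring
    have hkey : HasDerivAt yy (gg t) t ∧ HasDerivAt zz (yy t - ξ t) t := by
      by_cases hb1 : t < τ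
      · have hmem : Set.Ioo (0:ℝ) τ ∈ nhds t := isOpen_Ioo.mem_nhds ⟨ht0', hb1⟩
        have hyev : yy =ᶠ[nhds t] F1 :=
          Filter.eventuallyEq_of_mem hmem (fun s hs => by rw [hyy]; exact EPaux.pw_eq1 hs.2.le)
        have hzev : zz =ᶠ[nhds t] Z1 :=
          Filter.eventuallyEq_of_mem hmem (fun s hs => by rw [hzz]; exact EPaux.pw_eq1 hs.2.le)
        constructor
        · have hgt : gg t = G1 t := by rw [hgg, EPaux.pw_eq1 hb1.le]
          rw [hgt]
          simp only [hG1]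
          exact (EPaux.hd1y y₀ τ t).congr_of_eventuallyEq hyev
        · have hval : yy t - ξ t = 3*A/τ * (1 - t/τ)^2 := by
            rw [hyy, EPaux.pw_eq1 hb1.le]
            simp only [hF1, hξ, if_pos hb1.le]
            ring
          rw [hval]
          exact (EPaux.hd1z z₀ A τ t).congr_of_eventuallyEq hzev
      push_neg at hb1
      have hb1' : τ < t := lt_of_le_of_ne hb1 (Ne.symm hnτ)
      by_cases hb2 : t < T/3
      · have hmem : Set.Ioo τ (T/3) ∈ nhds t := isOpen_Ioo.mem_nhds ⟨hb1', hb2⟩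
        have hyev : yy =ᶠ[nhds t] (fun _ => (0:ℝ)) :=
          Filter.eventuallyEq_of_mem hmem
            (fun s hs => by rw [hyy]; exact EPaux.pw_eq2 (not_le.2 hs.1) hs.2.le)
        have hzev : zz =ᶠ[nhds t] (fun _ => z₀ + A) :=
          Filter.eventuallyEq_of_mem hmem
            (fun s hs => by rw [hzz]; exact EPaux.pw_eq2 (not_le.2 hs.1) hs.2.le)
        constructor
        · have hgt : gg t = 0 := by rw [hgg, EPaux.pw_eq2 (not_le.2 hb1') hb2.le]
          rw [hgt]
          exact (hasDerivAt_const t (0:ℝ)).congr_of_eventuallyEq hyev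
        · have hval : yy t - ξ t = 0 := by
            rw [hyy, EPaux.pw_eq2 (not_le.2 hb1') hb2.le]
            simp only [hξ, if_neg (not_le.2 hb1')]
            ring
          rw [hval]
          exact (hasDerivAt_const t (z₀ + A)).congr_of_eventuallyEq hzev
      push_neg at hb2
      have hb2' : T/3 < t := lt_of_le_of_ne hb2 (Ne.symm hn1)
      by_cases hb3 : t < 2*T/3
      · have hmem : Set.Ioo (T/3) (2*T/3) ∈ nhds t := isOpen_Ioo.mem_nhds ⟨hb2', hb3⟩
        have hcond : ∀ s ∈ Set.Ioo (T/3) (2*T/3), ¬ s ≤ τ ∧ ¬ s ≤ T/3 := by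
          intro s hs
          exact ⟨not_le.2 (lt_of_le_of_lt hτle hs.1), not_le.2 hs.1⟩
        have hyev : yy =ᶠ[nhds t] F3 :=
          Filter.eventuallyEq_of_mem hmem (fun s hs => by
            rw [hyy]; exact EPaux.pw_eq3 (hcond s hs).1 (hcond s hs).2 hs.2.le)
        have hzev : zz =ᶠ[nhds t] Z3 :=
          Filter.eventuallyEq_of_mem hmem (fun s hs => by
            rw [hzz]; exact EPaux.pw_eq3 (hcond s hs).1 (hcond s hs).2 hs.2.le)
        have hc1 : ¬ t ≤ τ := not_le.2 (lt_of_le_of_lt hτle hb2')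
        have hc2 : ¬ t ≤ T/3 := not_le.2 hb2'
        constructor
        · have hgt : gg t = G3 t := by rw [hgg, EPaux.pw_eq3 hc1 hc2 hb3.le]
          rw [hgt]
          simp only [hG3]
          exact (EPaux.hd3y ((zT - (z₀+A))/(T/3)) (T/3) (T/3) t).congr_of_eventuallyEq hyev
        · have hval : yy t - ξ t = F3 t := by
            rw [hyy, EPaux.pw_eq3 hc1 hc2 hb3.le]
            simp only [hξ, if_neg hc1]
            ring
          rw [hval]
          simp only [hF3]
          exact (EPaux.hd3z (z₀+A) (zT - (z₀+A)) (T/3) (T/3) t).congr_of_eventuallyEq hzev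
      push_neg at hb3
      have hb3' : 2*T/3 < t := lt_of_le_of_ne hb3 (Ne.symm hn2)
      by_cases hb4 : t < T - ε
      · have hmem : Set.Ioo (2*T/3) (T-ε) ∈ nhds t := isOpen_Ioo.mem_nhds ⟨hb3', hb4⟩
        have hcond : ∀ s ∈ Set.Ioo (2*T/3) (T-ε), ¬ s ≤ τ ∧ ¬ s ≤ T/3 ∧ ¬ s ≤ 2*T/3 := by
          intro s hs
          refine ⟨not_le.2 (lt_of_le_of_lt (hτle.trans hT13) hs.1),
            not_le.2 (lt_of_le_of_lt hT13 hs.1), not_le.2 hs.1⟩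
        have hyev : yy =ᶠ[nhds t] (fun _ => (0:ℝ)) :=
          Filter.eventuallyEq_of_mem hmem (fun s hs => by
            rw [hyy]
            exact EPaux.pw_eq4 (hcond s hs).1 (hcond s hs).2.1 (hcond s hs).2.2 hs.2.le)
        have hzev : zz =ᶠ[nhds t] (fun _ => zT) :=
          Filter.eventuallyEq_of_mem hmem (fun s hs => by
            rw [hzz]
            exact EPaux.pw_eq4 (hcond s hs).1 (hcond s hs).2.1 (hcond s hs).2.2 hs.2.le)
        have hc1 : ¬ t ≤ τ := not_le.2 (lt_of_le_of_lt (hτle.trans hT13) hb3')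
        have hc2 : ¬ t ≤ T/3 := not_le.2 (lt_of_le_of_lt hT13 hb3')
        have hc3 : ¬ t ≤ 2*T/3 := not_le.2 hb3'
        constructor
        · have hgt : gg t = 0 := by rw [hgg, EPaux.pw_eq4 hc1 hc2 hc3 hb4.le]
          rw [hgt]
          exact (hasDerivAt_const t (0:ℝ)).congr_of_eventuallyEq hyev
        · have hval : yy t - ξ t = 0 := by
            rw [hyy, EPaux.pw_eq4 hc1 hc2 hc3 hb4.le]
            simp only [hξ, if_neg hc1]
            ring
          rw [hval]
          exact (hasDerivAt_const t zT).congr_of_eventuallyEq hzev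
      push_neg at hb4
      have hb4' : T - ε < t := lt_of_le_of_ne hb4 (Ne.symm hnm)
      · have hmem : Set.Ioo (T-ε) T ∈ nhds t := isOpen_Ioo.mem_nhds ⟨hb4', htT'⟩
        have hcond : ∀ s ∈ Set.Ioo (T-ε) T,
            ¬ s ≤ τ ∧ ¬ s ≤ T/3 ∧ ¬ s ≤ 2*T/3 ∧ ¬ s ≤ T - ε := by
          intro s hs
          have h1 : 2*T/3 < s := lt_of_le_of_lt hTm hs.1
          exact ⟨not_le.2 (lt_of_le_of_lt (hτle.trans hT13) h1),
            not_le.2 (lt_of_le_of_lt hT13 h1), not_le.2 h1, not_le.2 hs.1⟩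
        have hyev : yy =ᶠ[nhds t] F5 :=
          Filter.eventuallyEq_of_mem hmem (fun s hs => by
            rw [hyy]
            exact EPaux.pw_eq5 (hcond s hs).1 (hcond s hs).2.1 (hcond s hs).2.2.1
              (hcond s hs).2.2.2)
        have hzev : zz =ᶠ[nhds t] Z5 :=
          Filter.eventuallyEq_of_mem hmem (fun s hs => by
            rw [hzz]
            exact EPaux.pw_eq5 (hcond s hs).1 (hcond s hs).2.1 (hcond s hs).2.2.1
              (hcond s hs).2.2.2)
        have hc := hcond t ⟨hb4', htT'⟩
        constructor
        · have hgt : gg t = G5 t := by rw [hgg, EPaux.pw_eq5 hc.1 hc.2.1 hc.2.2.1 hc.2.2.2]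
          rw [hgt]
          simp only [hG5]
          exact (EPaux.hd5y yT (T-ε) ε t).congr_of_eventuallyEq hyev
        · have hval : yy t - ξ t = F5 t := by
            rw [hyy, EPaux.pw_eq5 hc.1 hc.2.1 hc.2.2.1 hc.2.2.2]
            simp only [hξ, if_neg hc.1]
            ring
          rw [hval]
          simp only [hF5]
          exact (EPaux.hd5z zT yT (T-ε) ε hεpos.ne' t).congr_of_eventuallyEq hzev
    exact ⟨by rw [hsum]; exact hkey.1, hkey.2⟩
  · -- yy T = yT
    have c1 : ¬ T ≤ τ := not_le.2 (lt_of_le_of_lt hτle (by linarith))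
    have c2 : ¬ T ≤ T/3 := not_le.2 (by linarith)
    have c3 : ¬ T ≤ 2*T/3 := not_le.2 (by linarith)
    have c4 : ¬ T ≤ T - ε := not_le.2 (by linarith)
    rw [hyy, EPaux.pw_eq5 c1 c2 c3 c4]
    simp only [hF5]
    rw [hs52]
    ring
  · -- zz T = zT
    have c1 : ¬ T ≤ τ := not_le.2 (lt_of_le_of_lt hτle (by linarith))
    have c2 : ¬ T ≤ T/3 := not_le.2 (by linarith)
    have c3 : ¬ T ≤ 2*T/3 := not_le.2 (by linarith)
    have c4 : ¬ T ≤ T - ε := not_le.2 (by linarith)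
    rw [hzz, EPaux.pw_eq5 c1 c2 c3 c4]
    simp only [hZ5]
    rw [hs52]
    ring
end
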